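/- Let x* be the smallest positive solution of 8x + √17 x² − 4 = −2√((2Bx² + 4x)(x√(x²+2.5) + 2.5 sinh⁻¹(√0.4 x))), with B = √(π²/3 + 869/144). Then for all x ∈ (0, x*], the quadratic equation (2Bx² + 4x)y² + (8x + √17 x² − 4)y + x√(x²+2.5) + 2.5 sinh⁻¹(√0.4 x) = 0 has a nonnegative real root, and x* > 0.2. -/
import Mathlib


open Real

/-- The constant `B = √(π²/3 + 869/144)`. -/
noncomputable def Bconst : ℝ := Real.sqrt (π ^ 2 / 3 + 869 / 144)

/-- The function whose smallest positive zero is `x*`: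
`F x = 8x + √17 x² − 4 + 2√((2Bx² + 4x)(x√(x²+5/2) + (5/2) sinh⁻¹(√(2/5) x)))`. -/
noncomputable def Fstar (x : ℝ) : ℝ :=
  8 * x + Real.sqrt 17 * x ^ 2 - 4 +
    2 * Real.sqrt ((2 * Bconst * x ^ 2 + 4 * x) *
      (x * Real.sqrt (x ^ 2 + 5 / 2) + (5 / 2) * Real.arsinh (Real.sqrt (2 / 5) * x)))

lemma Fstar_continuous : Continuous Fstar := by
  unfold Fstar
  apply Continuous.add
  · fun_prop
  · apply Continuous.mul continuous_const
    apply Real.continuous_sqrt.comp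
    apply Continuous.mul
    · fun_prop
    · apply Continuous.add
      · fun_prop
      · exact continuous_const.mul (Real.continuous_arsinh.comp (by fun_prop))

lemma Fstar_zero : Fstar 0 = -4 := by
  simp [Fstar]

lemma Bconst_nonneg : 0 ≤ Bconst := Real.sqrt_nonneg _

lemma Bconst_le : Bconst ≤ 3.06 := by
  rw [Bconst, show (3.06 : ℝ) = Real.sqrt (3.06 ^ 2) by
    rw [Real.sqrt_sq]; norm_num]
  apply Real.sqrt_le_sqrt
  have h := Real.pi_lt_d2
  nlinarith [Real.pi_pos]

lemma arsinh_le_self {t : ℝ} (ht : 0 ≤ t) : Real.arsinh t ≤ t := by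
  rcases eq_or_lt_of_le ht with h | h
  · simp [← h]
  · have := Real.self_lt_sinh_iff.mpr h
    exact Real.sinh_le_sinh.mp (by rw [Real.sinh_arsinh]; linarith)

/-- Fstar is negative on (0, 0.2]. -/
lemma Fstar_neg {x : ℝ} (hx : 0 < x) (hx2 : x ≤ 0.2) : Fstar x < 0 := by
  have hB := Bconst_le
  have hB0 := Bconst_nonneg
  have h17 : Real.sqrt 17 ≤ 4.13 := by
    rw [Real.sqrt_le_iff]; norm_num
  have h17' : 0 ≤ Real.sqrt 17 := Real.sqrt_nonneg _
  -- bound a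
  have ha : 2 * Bconst * x ^ 2 + 4 * x ≤ 1.05 := by nlinarith
  have ha0 : 0 < 2 * Bconst * x ^ 2 + 4 * x := by nlinarith
  -- bound c
  have hs1 : Real.sqrt (x ^ 2 + 5 / 2) ≤ 1.6 := by
    rw [Real.sqrt_le_iff]; constructor <;> nlinarith
  have hs10 : 0 ≤ Real.sqrt (x ^ 2 + 5 / 2) := Real.sqrt_nonneg _
  have ht : Real.sqrt (2 / 5) * x ≤ 0.64 * x := by
    have : Real.sqrt (2 / 5) ≤ 0.64 := by rw [Real.sqrt_le_iff]; norm_num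
    nlinarith
  have ht0 : 0 ≤ Real.sqrt (2 / 5) * x := by positivity
  have harc : Real.arsinh (Real.sqrt (2 / 5) * x) ≤ 0.64 * x :=
    le_trans (arsinh_le_self ht0) ht
  have harc0 : 0 ≤ Real.arsinh (Real.sqrt (2 / 5) * x) :=
    Real.arsinh_nonneg_iff.mpr ht0
  have hc : x * Real.sqrt (x ^ 2 + 5 / 2) + (5 / 2) * Real.arsinh (Real.sqrt (2 / 5) * x)
      ≤ 0.65 := by nlinarith
  have hc0 : 0 ≤ x * Real.sqrt (x ^ 2 + 5 / 2) + (5 / 2) * Real.arsinh (Real.sqrt (2 / 5) * x) := by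
    positivity
  have hac : (2 * Bconst * x ^ 2 + 4 * x) *
      (x * Real.sqrt (x ^ 2 + 5 / 2) + (5 / 2) * Real.arsinh (Real.sqrt (2 / 5) * x)) ≤ 0.6889 := by
    nlinarith
  have hsq : Real.sqrt ((2 * Bconst * x ^ 2 + 4 * x) *
      (x * Real.sqrt (x ^ 2 + 5 / 2) + (5 / 2) * Real.arsinh (Real.sqrt (2 / 5) * x))) ≤ 0.83 := by
    rw [Real.sqrt_le_iff]; constructor
    · norm_num
    · nlinarith
  unfold Fstar
  nlinarith

/-- let `x*` be the smallest positive solution of `F x = 0`.  Then for all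
`x ∈ (0, x*]` the quadratic
`(2Bx² + 4x) y² + (8x + √17 x² − 4) y + x√(x²+5/2) + (5/2) sinh⁻¹(√(2/5) x) = 0`
has a nonnegative real root, and `x* > 0.2`. -/
theorem stmt19 (xstar : ℝ) (hpos : 0 < xstar) (hroot : Fstar xstar = 0)
    (hmin : ∀ y : ℝ, 0 < y → Fstar y = 0 → xstar ≤ y) :
    (∀ x : ℝ, 0 < x → x ≤ xstar → ∃ y : ℝ, 0 ≤ y ∧
      (2 * Bconst * x ^ 2 + 4 * x) * y ^ 2 +
        (8 * x + Real.sqrt 17 * x ^ 2 - 4) * y +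
        (x * Real.sqrt (x ^ 2 + 5 / 2) + (5 / 2) * Real.arsinh (Real.sqrt (2 / 5) * x))
        = 0) ∧
    0.2 < xstar := by
  constructor
  · intro x hx hxs
    -- Fstar x ≤ 0 on (0, xstar]
    have hF : Fstar x ≤ 0 := by
      by_contra h
      push_neg at h
      have hne : x < xstar := by
        rcases lt_or_eq_of_le hxs with h' | h'
        · exact h'
        · exfalso; rw [h', hroot] at h; exact lt_irrefl 0 h
      have : (0 : ℝ) ∈ Set.Icc (Fstar 0) (Fstar x) := by
        rw [Fstar_zero]; constructor <;> [norm_num; linarith]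
      obtain ⟨z, hz, hfz⟩ := intermediate_value_Icc (le_of_lt hx)
        Fstar_continuous.continuousOn this
      have hz0 : 0 < z := by
        rcases lt_or_eq_of_le hz.1 with h' | h'
        · exact h'
        · exfalso; rw [← h', Fstar_zero] at hfz; norm_num at hfz
      have := hmin z hz0 hfz
      linarith [hz.2]
    set a := 2 * Bconst * x ^ 2 + 4 * x with hadef
    set b := 8 * x + Real.sqrt 17 * x ^ 2 - 4 with hbdef
    set c := x * Real.sqrt (x ^ 2 + 5 / 2) + (5 / 2) * Real.arsinh (Real.sqrt (2 / 5) * x)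
      with hcdef
    have ha : 0 < a := by
      have := Bconst_nonneg; rw [hadef]; nlinarith
    have hc : 0 ≤ c := by
      have h1 : 0 ≤ Real.arsinh (Real.sqrt (2 / 5) * x) :=
        Real.arsinh_nonneg_iff.mpr (by positivity)
      have h2 : 0 ≤ Real.sqrt (x ^ 2 + 5 / 2) := Real.sqrt_nonneg _
      rw [hcdef]; nlinarith
    have hac : 0 ≤ a * c := mul_nonneg ha.le hc
    have hsac : Real.sqrt (a * c) ^ 2 = a * c := Real.sq_sqrt hac
    have hsac0 : 0 ≤ Real.sqrt (a * c) := Real.sqrt_nonneg _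
    have hb : b + 2 * Real.sqrt (a * c) ≤ 0 := by
      have : Fstar x = b + 2 * Real.sqrt (a * c) := by rw [Fstar, hbdef, hadef, hcdef]
      linarith [this ▸ hF]
    have hdisc : 0 ≤ b ^ 2 - 4 * (a * c) := by nlinarith
    set s := Real.sqrt (b ^ 2 - 4 * (a * c)) with hsdef
    have hs2 : s ^ 2 = b ^ 2 - 4 * (a * c) := Real.sq_sqrt hdisc
    have hs0 : 0 ≤ s := Real.sqrt_nonneg _
    have hbneg : b ≤ 0 := by nlinarith
    have hsb : s ≤ -b := by nlinarith
    refine ⟨(-b - s) / (2 * a), div_nonneg (by linarith) (by linarith), ?_⟩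
    have h2a : (2 * a) ≠ 0 := by positivity
    field_simp
    nlinarith [hs2, sq_nonneg s]
  · by_contra h
    push_neg at h
    have := Fstar_neg hpos (by norm_num; linarith)
    linarith [hroot ▸ this]
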